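/- arXiv:0712.4139 — 3 statements merged into one kernel-verified Lean document; each statement's English description precedes it below -/
import Mathlib

section
/- Conversely, every point (y₁,y₂,y₃) ∈ ℂ³ with y₁²+y₂²+y₃²=0 can be written as (i/2·(f²+g²), 1/2·(g²−f²), f·g) for some complex numbers f, g. -/
open Complex

theorem weierstrass_factorization_surjective (y₁ y₂ y₃ : ℂ)
    (h : y₁ ^ 2 + y₂ ^ 2 + y₃ ^ 2 = 0) :
    ∃ f g : ℂ, y₁ = I / 2 * (f ^ 2 + g ^ 2) ∧ y₂ = 1 / 2 * (g ^ 2 - f ^ 2) ∧ y₃ = f * g := by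
  obtain ⟨a, ha⟩ := IsAlgClosed.exists_pow_nat_eq (-I * y₁ - y₂) two_pos
  obtain ⟨b, hb⟩ := IsAlgClosed.exists_pow_nat_eq (-I * y₁ + y₂) two_pos
  have hI : I ^ 2 = -1 := I_sq
  have hsq : (a * b) ^ 2 = y₃ ^ 2 := by
    rw [mul_pow, ha, hb]
    linear_combination y₁ ^ 2 * hI - h
  have hcase : a * b = y₃ ∨ a * b = -y₃ := by
    have h0 : (a * b - y₃) * (a * b + y₃) = 0 := by linear_combination hsq
    rcases mul_eq_zero.mp h0 with h1 | h1
    · left; exact sub_eq_zero.mp h1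
    · right; exact eq_neg_of_add_eq_zero_left h1
  rcases hcase with h1 | h1
  · exact ⟨a, b, by rw [ha, hb]; linear_combination y₁ * hI,
      by rw [ha, hb]; ring, h1.symm⟩
  · refine ⟨-a, b, ?_, ?_, ?_⟩
    · rw [neg_pow, ha, hb]; ring_nf; linear_combination y₁ * hI
    · rw [neg_pow, ha, hb]; ring
    · linear_combination h1
end

section
/- Suppose v : D → ℂ is smooth, ψ = (ψ₁,ψ₂) satisfies ∂̄ψ₁ = e^v ψ₂ and ∂̄ψ₂ = −B̄ e^{−v} ψ₁ + v_z̄ ψ₂, together with ∂ψ₁ = v_z ψ₁ + B e^{−v} ψ₂ and ∂ψ₂ = −e^v ψ₁, where B is a nonzero constant. Then the compatibility condition ∂∂̄ψ = ∂̄∂ψ forces v_{zz̄} + e^{2v} − |B|² e^{−2v} = 0. -/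
open Complex

/-- The Wirtinger derivative `∂f = (f_u - i f_v)/2`. -/
noncomputable def wdz (f : ℂ → ℂ) (z : ℂ) : ℂ :=
  (fderiv ℝ f z 1 - I * fderiv ℝ f z I) / 2

/-- The Wirtinger derivative `∂̄f = (f_u + i f_v)/2`. -/
noncomputable def wdzbar (f : ℂ → ℂ) (z : ℂ) : ℂ :=
  (fderiv ℝ f z 1 + I * fderiv ℝ f z I) / 2

section aux

variable {f g : ℂ → ℂ} {z w : ℂ}

lemma contDiff_fderiv_apply (hf : ContDiff ℝ (⊤ : ℕ∞) f) (w : ℂ) :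
    ContDiff ℝ (⊤ : ℕ∞) (fun z => fderiv ℝ f z w) :=
  (hf.fderiv_right ((by simp))).clm_apply contDiff_const

lemma contDiff_wdz (hf : ContDiff ℝ (⊤ : ℕ∞) f) : ContDiff ℝ (⊤ : ℕ∞) (wdz f) := by
  unfold wdz
  exact (((contDiff_fderiv_apply hf 1).sub
    (contDiff_const.mul (contDiff_fderiv_apply hf I)))).div_const 2

lemma contDiff_wdzbar (hf : ContDiff ℝ (⊤ : ℕ∞) f) : ContDiff ℝ (⊤ : ℕ∞) (wdzbar f) := by
  unfold wdzbar
  exact (((contDiff_fderiv_apply hf 1).add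
    (contDiff_const.mul (contDiff_fderiv_apply hf I)))).div_const 2

lemma wdz_add (hf : DifferentiableAt ℝ f z) (hg : DifferentiableAt ℝ g z) :
    wdz (fun z => f z + g z) z = wdz f z + wdz g z := by
  unfold wdz; rw [fderiv_fun_add hf hg]; simp; ring

lemma wdzbar_add (hf : DifferentiableAt ℝ f z) (hg : DifferentiableAt ℝ g z) :
    wdzbar (fun z => f z + g z) z = wdzbar f z + wdzbar g z := by
  unfold wdzbar; rw [fderiv_fun_add hf hg]; simp; ring

lemma wdz_mul (hf : DifferentiableAt ℝ f z) (hg : DifferentiableAt ℝ g z) :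
    wdz (fun z => f z * g z) z = wdz f z * g z + f z * wdz g z := by
  unfold wdz; rw [fderiv_fun_mul hf hg]; simp [smul_eq_mul]; ring

lemma wdzbar_mul (hf : DifferentiableAt ℝ f z) (hg : DifferentiableAt ℝ g z) :
    wdzbar (fun z => f z * g z) z = wdzbar f z * g z + f z * wdzbar g z := by
  unfold wdzbar; rw [fderiv_fun_mul hf hg]; simp [smul_eq_mul]; ring

lemma wdz_exp (hf : DifferentiableAt ℝ f z) :
    wdz (fun z => Complex.exp (f z)) z = Complex.exp (f z) * wdz f z := by
  unfold wdz; rw [hf.hasFDerivAt.cexp.fderiv]; simp [smul_eq_mul]; ring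

lemma wdzbar_exp (hf : DifferentiableAt ℝ f z) :
    wdzbar (fun z => Complex.exp (f z)) z = Complex.exp (f z) * wdzbar f z := by
  unfold wdzbar; rw [hf.hasFDerivAt.cexp.fderiv]; simp [smul_eq_mul]; ring

lemma wdz_const_mul (c : ℂ) (hf : DifferentiableAt ℝ f z) :
    wdz (fun z => c * f z) z = c * wdz f z := by
  unfold wdz; rw [fderiv_const_mul hf c]; simp [smul_eq_mul]; ring

lemma wdzbar_const_mul (c : ℂ) (hf : DifferentiableAt ℝ f z) :
    wdzbar (fun z => c * f z) z = c * wdzbar f z := by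
  unfold wdzbar; rw [fderiv_const_mul hf c]; simp [smul_eq_mul]; ring

lemma wdz_neg_comp (hf : DifferentiableAt ℝ f z) :
    wdz (fun z => -f z) z = -wdz f z := by
  have := wdz_const_mul (-1) hf (z := z); simpa using this

lemma wdzbar_neg_comp (hf : DifferentiableAt ℝ f z) :
    wdzbar (fun z => -f z) z = -wdzbar f z := by
  have := wdzbar_const_mul (-1) hf (z := z); simpa using this

lemma fderiv_fderiv_apply (hf : ContDiff ℝ (⊤ : ℕ∞) f) (z w w' : ℂ) :
    fderiv ℝ (fun z => fderiv ℝ f z w) z w' = fderiv ℝ (fderiv ℝ f) z w' w := by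
  have hd : DifferentiableAt ℝ (fderiv ℝ f) z :=
    ((hf.fderiv_right (m := (⊤ : ℕ∞)) ((by simp))).differentiable (by simp)) z
  have := fderiv_clm_apply (c := fderiv ℝ f) (u := fun _ => w) hd
    (differentiableAt_const w)
  rw [show (fun z => fderiv ℝ f z w) = (fun y => (fderiv ℝ f y) ((fun _ : ℂ => w) y)) from rfl,
    this]
  simp

lemma wdz_wdzbar_comm (hf : ContDiff ℝ (⊤ : ℕ∞) f) (z : ℂ) :
    wdz (wdzbar f) z = wdzbar (wdz f) z := by
  have hsymm : ∀ a b : ℂ, fderiv ℝ (fderiv ℝ f) z a b = fderiv ℝ (fderiv ℝ f) z b a :=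
    hf.contDiffAt.isSymmSndFDerivAt (by rw [minSmoothness_of_isRCLikeNormedField]; exact WithTop.coe_le_coe.mpr (le_top : (2 : ℕ∞) ≤ ⊤))
  have h1 : DifferentiableAt ℝ (fun z => fderiv ℝ f z 1) z :=
    ((contDiff_fderiv_apply hf 1).differentiable (by simp)) z
  have hI : DifferentiableAt ℝ (fun z => fderiv ℝ f z I) z :=
    ((contDiff_fderiv_apply hf I).differentiable (by simp)) z
  have key : ∀ w : ℂ, (fun x => (fderiv ℝ f x 1 + I * fderiv ℝ f x I) / 2) = wdzbar f := by
    intro _; rfl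
  unfold wdz wdzbar
  have e1 : ∀ w : ℂ, fderiv ℝ (fun x => (fderiv ℝ f x 1 + I * fderiv ℝ f x I) / 2) z w
      = (fderiv ℝ (fderiv ℝ f) z w 1 + I * fderiv ℝ (fderiv ℝ f) z w I) / 2 := by
    intro w
    rw [show (fun x => (fderiv ℝ f x 1 + I * fderiv ℝ f x I) / 2)
        = (fun x => (fderiv ℝ f x 1 + I * fderiv ℝ f x I) * (2⁻¹ : ℂ)) by
      funext x; rw [div_eq_mul_inv]]
    rw [fderiv_mul_const (h1.fun_add (hI.const_mul I))]
    simp only [ContinuousLinearMap.smul_apply, smul_eq_mul]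
    rw [fderiv_fun_add h1 (hI.const_mul I)]
    simp only [ContinuousLinearMap.add_apply]
    rw [fderiv_const_mul hI I]
    simp only [ContinuousLinearMap.smul_apply, smul_eq_mul]
    rw [fderiv_fderiv_apply hf, fderiv_fderiv_apply hf]
    ring
  have e2 : ∀ w : ℂ, fderiv ℝ (fun x => (fderiv ℝ f x 1 - I * fderiv ℝ f x I) / 2) z w
      = (fderiv ℝ (fderiv ℝ f) z w 1 - I * fderiv ℝ (fderiv ℝ f) z w I) / 2 := by
    intro w
    rw [show (fun x => (fderiv ℝ f x 1 - I * fderiv ℝ f x I) / 2)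
        = (fun x => (fderiv ℝ f x 1 - I * fderiv ℝ f x I) * (2⁻¹ : ℂ)) by
      funext x; rw [div_eq_mul_inv]]
    rw [fderiv_mul_const (h1.fun_sub (hI.const_mul I))]
    simp only [ContinuousLinearMap.smul_apply, smul_eq_mul]
    rw [fderiv_fun_sub h1 (hI.const_mul I)]
    simp only [ContinuousLinearMap.sub_apply]
    rw [fderiv_const_mul hI I]
    simp only [ContinuousLinearMap.smul_apply, smul_eq_mul]
    rw [fderiv_fderiv_apply hf, fderiv_fderiv_apply hf]
    ring
  rw [e1 1, e1 I, e2 1, e2 I, hsymm 1 I]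
  ring

end aux

theorem berdinsky_compatibility_sinh_gordon (v ψ₁ ψ₂ : ℂ → ℂ)
    (hv : ContDiff ℝ (⊤ : ℕ∞) v) (hψ₁ : ContDiff ℝ (⊤ : ℕ∞) ψ₁) (hψ₂ : ContDiff ℝ (⊤ : ℕ∞) ψ₂)
    (B : ℂ) (hB : B ≠ 0)
    (hspin : ∀ z, ψ₁ z ≠ 0 ∨ ψ₂ z ≠ 0)
    (h1 : ∀ z, wdzbar ψ₁ z = Complex.exp (v z) * ψ₂ z)
    (h2 : ∀ z, wdzbar ψ₂ z =
      -starRingEnd ℂ B * Complex.exp (-v z) * ψ₁ z + wdzbar v z * ψ₂ z)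
    (h3 : ∀ z, wdz ψ₁ z = wdz v z * ψ₁ z + B * Complex.exp (-v z) * ψ₂ z)
    (h4 : ∀ z, wdz ψ₂ z = -Complex.exp (v z) * ψ₁ z) :
    ∀ z, wdz (wdzbar v) z + Complex.exp (2 * v z) -
      ((‖B‖ : ℝ) : ℂ) ^ 2 * Complex.exp (-2 * v z) = 0 := by
  intro z
  -- differentiability facts
  have dv : ∀ z, DifferentiableAt ℝ v z := fun z => (hv.differentiable (by simp)) z
  have dψ₁ : ∀ z, DifferentiableAt ℝ ψ₁ z := fun z => (hψ₁.differentiable (by simp)) z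
  have dψ₂ : ∀ z, DifferentiableAt ℝ ψ₂ z := fun z => (hψ₂.differentiable (by simp)) z
  have dnegv : ∀ z, DifferentiableAt ℝ (fun z => -v z) z := fun z => (dv z).neg
  have dexpv : ∀ z, DifferentiableAt ℝ (fun z => Complex.exp (v z)) z :=
    fun z => (dv z).cexp
  have dexpnv : ∀ z, DifferentiableAt ℝ (fun z => Complex.exp (-v z)) z :=
    fun z => (dnegv z).cexp
  have dwdzv : ∀ z, DifferentiableAt ℝ (wdz v) z :=
    fun z => ((contDiff_wdz hv).differentiable (by simp)) z
  have dwdzbarv : ∀ z, DifferentiableAt ℝ (wdzbar v) z :=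
    fun z => ((contDiff_wdzbar hv).differentiable (by simp)) z
  -- |B|^2 = conj B * B
  have hBB : ((‖B‖ : ℝ) : ℂ) ^ 2 = starRingEnd ℂ B * B := by
    rw [mul_comm, Complex.mul_conj, Complex.normSq_eq_norm_sq]; push_cast; ring
  set E := wdz (wdzbar v) z + Complex.exp (2 * v z) -
      ((‖B‖ : ℝ) : ℂ) ^ 2 * Complex.exp (-2 * v z) with hE
  -- exp identities
  have hexp2 : Complex.exp (2 * v z) = Complex.exp (v z) * Complex.exp (v z) := by
    rw [← Complex.exp_add]; ring_nf
  have hexpn2 : Complex.exp (-2 * v z) = Complex.exp (-v z) * Complex.exp (-v z) := by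
    rw [← Complex.exp_add]; ring_nf
  -- equality 1: via ψ₁
  have eq1 : E * ψ₁ z = 0 := by
    -- wdz (wdzbar ψ₁) z
    have lhs1 : wdz (wdzbar ψ₁) z
        = Complex.exp (v z) * wdz v z * ψ₂ z - Complex.exp (2 * v z) * ψ₁ z := by
      have : wdzbar ψ₁ = fun z => Complex.exp (v z) * ψ₂ z := funext h1
      rw [this, wdz_mul (dexpv z) (dψ₂ z), wdz_exp (dv z), h4 z, hexp2]
      ring
    -- wdzbar (wdz ψ₁) z
    have rhs1 : wdzbar (wdz ψ₁) z
        = wdz (wdzbar v) z * ψ₁ z + wdz v z * Complex.exp (v z) * ψ₂ z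
          - ((‖B‖ : ℝ) : ℂ) ^ 2 * Complex.exp (-2 * v z) * ψ₁ z := by
      have : wdz ψ₁ = fun z => wdz v z * ψ₁ z + B * Complex.exp (-v z) * ψ₂ z :=
        funext h3
      rw [this]
      rw [wdzbar_add ((dwdzv z).fun_mul (dψ₁ z))
        ((differentiableAt_const B |>.fun_mul (dexpnv z)).fun_mul (dψ₂ z))]
      rw [wdzbar_mul (dwdzv z) (dψ₁ z)]
      rw [wdzbar_mul ((differentiableAt_const B).fun_mul (dexpnv z)) (dψ₂ z)]
      rw [wdzbar_const_mul B (dexpnv z), wdzbar_exp (dnegv z), wdzbar_neg_comp (dv z)]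
      rw [← wdz_wdzbar_comm hv z] at *
      rw [h1 z, h2 z, hBB, hexpn2]
      ring
    have := (wdz_wdzbar_comm hψ₁ z).symm
    rw [lhs1] at this
    rw [rhs1] at this
    -- this : e^v wdzv ψ₂ - e^{2v} ψ₁ = wdz(wdzbar v) ψ₁ + wdzv e^v ψ₂ - |B|² e^{-2v} ψ₁
    have : E * ψ₁ z = 0 := by rw [hE]; linear_combination this
    exact this
  -- equality 2: via ψ₂
  have eq2 : E * ψ₂ z = 0 := by
    have lhs2 : wdz (wdzbar ψ₂) z
        = -((‖B‖ : ℝ) : ℂ) ^ 2 * Complex.exp (-2 * v z) * ψ₂ z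
          + wdz (wdzbar v) z * ψ₂ z - wdzbar v z * Complex.exp (v z) * ψ₁ z := by
      have hfun : wdzbar ψ₂ = fun z =>
          -starRingEnd ℂ B * Complex.exp (-v z) * ψ₁ z + wdzbar v z * ψ₂ z := funext h2
      rw [hfun]
      rw [wdz_add (((differentiableAt_const _).fun_mul (dexpnv z)).fun_mul (dψ₁ z))
        ((dwdzbarv z).fun_mul (dψ₂ z))]
      rw [wdz_mul ((differentiableAt_const _).fun_mul (dexpnv z)) (dψ₁ z)]
      rw [wdz_const_mul _ (dexpnv z), wdz_exp (dnegv z), wdz_neg_comp (dv z)]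
      rw [wdz_mul (dwdzbarv z) (dψ₂ z)]
      rw [h3 z, h4 z, hBB, hexpn2]
      ring
    have rhs2 : wdzbar (wdz ψ₂) z
        = -Complex.exp (v z) * wdzbar v z * ψ₁ z - Complex.exp (2 * v z) * ψ₂ z := by
      have hfun : wdz ψ₂ = fun z => (-Complex.exp (v z)) * ψ₁ z := funext h4
      rw [hfun]
      rw [wdzbar_mul ((dexpv z).fun_neg) (dψ₁ z)]
      rw [show (fun z => -Complex.exp (v z)) = (fun z => -(fun z => Complex.exp (v z)) z)
        from rfl]
      rw [wdzbar_neg_comp (dexpv z), wdzbar_exp (dv z), h1 z, hexp2]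
      ring
    have hc := wdz_wdzbar_comm hψ₂ z
    rw [lhs2, rhs2] at hc
    rw [hE]; linear_combination hc
  rcases hspin z with h | h
  · exact (mul_eq_zero.mp eq1).resolve_right h
  · exact (mul_eq_zero.mp eq2).resolve_right h
end

section
/- Let u, σ : [0,L] → ℝ be smooth with u > 0, u(0) = u(L), σ(0) = σ(L) (a closed generating curve), and u̇ = cos σ. Then ∫₀ᴸ (d/ds)[u̇·√(4+u²)] ds = 0, so the spinor energy formula E(M) = (π/8)∫_γ(σ̇ − sinσ/u)²√(4u²+u⁴)ds − (π/4)∫_γ (d/ds)[u̇√(4+u²)]ds reduces for such closed curves (torus of revolution, χ = 0) to E(M) = (π/8)∫_γ(σ̇ − sinσ/u)²√(4u²+u⁴)ds ≥ 0; moreover E(M) > 0 unless σ̇ = sinσ/u identically. -/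
open Real intervalIntegral ContDiff

theorem spinor_energy_of_revolution_torus (L : ℝ) (hL : 0 < L)
    (u σ : ℝ → ℝ) (hu : ContDiff ℝ (⊤ : ℕ∞) u) (hσ : ContDiff ℝ (⊤ : ℕ∞) σ)
    (hper_u : u 0 = u L) (hper_σ : σ 0 = σ L)
    (hupos : ∀ s ∈ Set.Icc 0 L, 0 < u s)
    (harc : ∀ s ∈ Set.Icc 0 L, deriv u s = Real.cos (σ s))
    (E : ℝ)
    (hE : E = π / 8 * ∫ s in (0 : ℝ)..L,
      (deriv σ s - Real.sin (σ s) / u s) ^ 2 * Real.sqrt (4 * u s ^ 2 + u s ^ 4)) :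
    (∫ s in (0 : ℝ)..L,
        deriv (fun t => deriv u t * Real.sqrt (4 + u t ^ 2)) s) = 0 ∧
    0 ≤ E ∧
    ((∃ s ∈ Set.Icc (0 : ℝ) L, deriv σ s ≠ Real.sin (σ s) / u s) → 0 < E) := by
  set g : ℝ → ℝ := fun t => deriv u t * Real.sqrt (4 + u t ^ 2) with hgdef
  have hu' : ContDiff ℝ ∞ u := hu.of_le (by simp)
  have hσ' : ContDiff ℝ ∞ σ := hσ.of_le (by simp)
  have hdu : ContDiff ℝ ∞ (deriv u) := (contDiff_infty_iff_deriv.mp hu').2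
  have hsqrt : ContDiff ℝ ∞ fun t => Real.sqrt (4 + u t ^ 2) := by
    rw [contDiff_iff_contDiffAt]
    intro t
    have h : (4 + u t ^ 2 : ℝ) ≠ 0 := by positivity
    exact ((Real.contDiffAt_sqrt h).of_le le_top).comp t ((contDiff_const.add (hu'.pow 2)).contDiffAt)
  have hg : ContDiff ℝ ∞ g := hdu.mul hsqrt
  have part1 : (∫ s in (0 : ℝ)..L, deriv g s) = 0 := by
    have hftc : (∫ s in (0 : ℝ)..L, deriv g s) = g L - g 0 :=
      intervalIntegral.integral_deriv_eq_sub
        (fun x _ => (hg.differentiable (by norm_num)).differentiableAt)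
        ((hg.continuous_deriv (by norm_num)).intervalIntegrable 0 L)
    have h0 : g 0 = g L := by
      simp only [hgdef]
      rw [harc 0 ⟨le_refl 0, hL.le⟩, harc L ⟨hL.le, le_refl L⟩, hper_u, hper_σ]
    rw [hftc, h0, sub_self]
  refine ⟨part1, ?_, ?_⟩
  · rw [hE]
    have hI : 0 ≤ ∫ s in (0 : ℝ)..L,
        (deriv σ s - Real.sin (σ s) / u s) ^ 2 * Real.sqrt (4 * u s ^ 2 + u s ^ 4) :=
      intervalIntegral.integral_nonneg hL.le (fun s _ => by positivity)
    have hpi : (0:ℝ) ≤ π / 8 := by positivity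
    exact mul_nonneg hpi hI
  · rintro ⟨c, hc, hne⟩
    rw [hE]
    have hcont : ContinuousOn
        (fun s => (deriv σ s - Real.sin (σ s) / u s) ^ 2 * Real.sqrt (4 * u s ^ 2 + u s ^ 4))
        (Set.Icc 0 L) := by
      have hdσ : Continuous (deriv σ) := (contDiff_infty_iff_deriv.mp hσ').2.continuous
      have hucont : Continuous u := hu.continuous
      refine ContinuousOn.mul ?_ ?_
      · refine ContinuousOn.pow ?_ 2
        refine ContinuousOn.sub hdσ.continuousOn ?_
        exact ContinuousOn.div (Real.continuous_sin.comp (hσ.continuous)).continuousOn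
          hucont.continuousOn (fun x hx => (hupos x hx).ne')
      · exact (Real.continuous_sqrt.comp
          (by continuity : Continuous fun s => 4 * u s ^ 2 + u s ^ 4)).continuousOn
    have hIpos : 0 < ∫ s in (0 : ℝ)..L,
        (deriv σ s - Real.sin (σ s) / u s) ^ 2 * Real.sqrt (4 * u s ^ 2 + u s ^ 4) := by
      apply intervalIntegral.integral_pos hL hcont (fun x _ => by positivity)
      refine ⟨c, hc, ?_⟩
      have h1 : 0 < (deriv σ c - Real.sin (σ c) / u c) ^ 2 := by
        have : deriv σ c - Real.sin (σ c) / u c ≠ 0 := sub_ne_zero.mpr hne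
        positivity
      have h2 : 0 < Real.sqrt (4 * u c ^ 2 + u c ^ 4) := by
        have := hupos c hc
        positivity
      exact mul_pos h1 h2
    have hpi : (0:ℝ) < π / 8 := by positivity
    exact mul_pos hpi hIpos
end
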